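/- Volterra expansion: let D² and P be n×n complex matrices with P nilpotent of order k+1 lying in a nilpotent ideal (e.g. P has strictly positive form degree so P^{k+1} = 0 in a suitable graded algebra). Then e^{-(D² + P)} = e^{-D²} + Σ_{j=1}^{k} (-1)^j ∫_{Δ_j} e^{-u₀D²} P e^{-u₁D²} P ⋯ P e^{-u_jD²} dσ(u), where Δ_j = {(u₀,…,u_j) ∈ [0,1]^{j+1} : Σ u_i = 1}; in particular the series terminates after k terms. -/

import Mathlib

/-!
Duhamel's formula `e^{-t(D+P)} = e^{-tD} - ∫₀ᵗ e^{-(t-x)(D+P)} P e^{-xD} dx`, applied to the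
first exponential of the integrand over `Δ_j` and combined with Fubini along `Δ_{j+1} → Δ_j`,
gives `R_{j+1} = T_j - R_j`, where `T_j` is the `j`-th term of the expansion and `R_j` is the same
integral with first factor `e^{-u₀(D+P)}` instead of `e^{-u₀D}`. Since `R_0 = e^{-(D+P)}`,
unrolling yields `e^{-(D+P)} = ∑_{j ≤ k} (-1)^j T_j + (-1)^{k+1} R_{k+1}`, and `R_{k+1} = 0`
because its integrand contains `k + 1` factors from the ideal.
-/

open MeasureTheory NormedSpace

section Duhamel

variable {A : Type*} [NormedRing A] [NormedAlgebra ℝ A] [CompleteSpace A]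

lemma continuous_exp_neg_smul (X : A) : Continuous fun t : ℝ => exp (-(t • X)) := by
  simpa only [smul_neg] using (differentiable_exp_smul_const ℝ (-X)).continuous

/-- Duhamel's formula, obtained by integrating the derivative of
`x ↦ e^{-(t-x)(X+Y)} e^{-xX}` over `[0, t]`. -/
theorem exp_neg_smul_add_eq_sub_integral (X Y : A) (t : ℝ) :
    exp (-(t • (X + Y))) = exp (-(t • X)) -
      ∫ x in (0 : ℝ)..t, exp (-((t - x) • (X + Y))) * Y * exp (-(x • X)) := by
  have hderiv : ∀ x ∈ Set.uIcc 0 t,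
      HasDerivAt (fun x => exp (-((t - x) • (X + Y))) * exp (-(x • X)))
        (exp (-((t - x) • (X + Y))) * Y * exp (-(x • X))) x := by
    intro x _
    have h₁ : HasDerivAt (fun x : ℝ => exp (-((t - x) • (X + Y))))
        (exp (-((t - x) • (X + Y))) * (X + Y)) x := by
      simpa only [← neg_smul, neg_sub] using
        (hasDerivAt_exp_smul_const (X + Y) (x - t)).comp_sub_const x t
    have h₂ : HasDerivAt (fun x : ℝ => exp (-(x • X))) (-X * exp (-(x • X))) x := by
      simpa only [smul_neg] using hasDerivAt_exp_smul_const' (-X) x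
    refine (h₁.mul h₂).congr_deriv ?_
    simp only [mul_add, add_mul, mul_neg, neg_mul, mul_assoc]
    abel
  have hcont : Continuous fun x : ℝ => exp (-((t - x) • (X + Y))) * Y * exp (-(x • X)) :=
    (((continuous_exp_neg_smul (X + Y)).comp (continuous_sub_left t)).mul
      continuous_const).mul (continuous_exp_neg_smul X)
  rw [intervalIntegral.integral_eq_sub_of_hasDerivAt hderiv (hcont.intervalIntegrable _ _)]
  simp

end Duhamel

/-- The simplex `Δ_j = {u₀ + ⋯ + u_j = 1}` in the chart `(u₁, …, u_j)`, with `u₀ = 1 - ∑ uᵢ`. -/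
def cornerSimplex (j : ℕ) : Set (Fin j → ℝ) := {u | (∀ i, 0 ≤ u i) ∧ ∑ i, u i ≤ 1}

namespace cornerSimplex

@[simp]
lemma zero : cornerSimplex 0 = Set.univ := by
  ext u; simp [cornerSimplex]

lemma isClosed (j : ℕ) : IsClosed (cornerSimplex j) := by
  refine IsClosed.inter (s₁ := {u : Fin j → ℝ | ∀ i, 0 ≤ u i}) ?_
    (isClosed_le (f := fun u : Fin j → ℝ => ∑ i, u i) (by fun_prop) continuous_const)
  simpa only [Set.ofPred_forall] using
    isClosed_iInter fun i => isClosed_le continuous_const (continuous_apply i)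

lemma isCompact (j : ℕ) : IsCompact (cornerSimplex j) := by
  refine (isCompact_univ_pi fun _ => isCompact_Icc (a := (0 : ℝ)) (b := 1)).of_isClosed_subset
    (isClosed j) ?_
  intro u hu i _
  exact ⟨hu.1 i, (Finset.single_le_sum (fun i' _ => hu.1 i') (Finset.mem_univ i)).trans hu.2⟩

lemma measurableSet (j : ℕ) : MeasurableSet (cornerSimplex j) := (isClosed j).measurableSet

lemma cons_mem_iff {m : ℕ} (x : ℝ) (u : Fin m → ℝ) :
    (Fin.cons x u : Fin (m + 1) → ℝ) ∈ cornerSimplex (m + 1) ↔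
      u ∈ cornerSimplex m ∧ x ∈ Set.Icc 0 (1 - ∑ i, u i) := by
  simp only [cornerSimplex, Set.mem_ofPred_eq, Fin.forall_fin_succ, Fin.cons_zero, Fin.cons_succ,
    Fin.sum_cons, Set.mem_Icc]
  constructor
  · rintro ⟨⟨hx, hu⟩, hsum⟩
    exact ⟨⟨hu, by linarith⟩, hx, by linarith⟩
  · rintro ⟨⟨hu, -⟩, hx, hxu⟩
    exact ⟨⟨hx, hu⟩, by linarith⟩

end cornerSimplex

section Fubini

variable {E : Type*} [NormedAddCommGroup E] [NormedSpace ℝ E]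

lemma integral_indicator_cornerSimplex_cons {m : ℕ} (Φ : (Fin (m + 1) → ℝ) → E)
    (u : Fin m → ℝ) :
    ∫ x, (cornerSimplex (m + 1)).indicator Φ (Fin.cons x u) =
      (cornerSimplex m).indicator
        (fun u => ∫ x in (0 : ℝ)..(1 - ∑ i, u i), Φ (Fin.cons x u)) u := by
  classical
  by_cases hu : u ∈ cornerSimplex m
  · rw [Set.indicator_of_mem hu, intervalIntegral.integral_of_le (sub_nonneg.2 hu.2),
      ← integral_Icc_eq_integral_Ioc, ← integral_indicator measurableSet_Icc]
    simp only [Set.indicator_apply, cornerSimplex.cons_mem_iff, hu, true_and]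
  · simp [cornerSimplex.cons_mem_iff, hu]

theorem setIntegral_cornerSimplex_succ {m : ℕ} {Φ : (Fin (m + 1) → ℝ) → E}
    (hΦ : IntegrableOn Φ (cornerSimplex (m + 1))) :
    ∫ v in cornerSimplex (m + 1), Φ v =
      ∫ u in cornerSimplex m, ∫ x in (0 : ℝ)..(1 - ∑ i, u i), Φ (Fin.cons x u) := by
  set e := (MeasurableEquiv.piFinSuccAbove (fun _ : Fin (m + 1) => ℝ) 0).symm
  have he : MeasurePreserving e := (volume_preserving_piFinSuccAbove _ 0).symm
  have he_apply (p : ℝ × (Fin m → ℝ)) : e p = Fin.cons p.1 p.2 := by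
    simp [e, MeasurableEquiv.piFinSuccAbove_symm_apply, Fin.insertNthEquiv, Fin.insertNth_zero']
  have hint : Integrable fun p => (cornerSimplex (m + 1)).indicator Φ (e p) :=
    he.integrable_comp_of_integrable
      ((integrable_indicator_iff (cornerSimplex.measurableSet _)).2 hΦ)
  rw [← integral_indicator (cornerSimplex.measurableSet _),
    ← integral_indicator (cornerSimplex.measurableSet _), ← he.integral_comp',
    Measure.volume_eq_prod, integral_prod_symm _ hint]
  simp only [he_apply, integral_indicator_cornerSimplex_cons]

end Fubini

section Volterra

variable {A : Type*} [NormedRing A] [NormedAlgebra ℝ A]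

noncomputable def volterraProd (D P : A) {j : ℕ} (u : Fin j → ℝ) : A :=
  (List.ofFn fun i => P * exp (-(u i • D))).prod

/-- `T_j = volterraIntegral D D P j` and `R_j = volterraIntegral (D + P) D P j`. -/
noncomputable def volterraIntegral (X D P : A) (j : ℕ) : A :=
  ∫ u in cornerSimplex j, exp (-((1 - ∑ i, u i) • X)) * volterraProd D P u

lemma volterraIntegral_eq_zero_of_mem {N : Set A} {k : ℕ} (hN : ∀ a : A, ∀ x ∈ N, x * a ∈ N)
    (hnil : ∀ f : Fin k → A, (∀ i, f i ∈ N) → (List.ofFn f).prod = 0) {P : A} (hP : P ∈ N)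
    (X D : A) :
    volterraIntegral X D P k = 0 := by
  simp [volterraIntegral, volterraProd, hnil _ fun i => hN _ P hP]

variable (D P : A)

lemma volterraProd_cons {m : ℕ} (x : ℝ) (u : Fin m → ℝ) :
    volterraProd D P (Fin.cons x u : Fin (m + 1) → ℝ) =
      P * exp (-(x • D)) * volterraProd D P u := by
  simp [volterraProd, List.ofFn_succ]

variable [CompleteSpace A]

lemma continuous_volterraProd (j : ℕ) : Continuous (volterraProd D P (j := j)) := by
  unfold volterraProd
  simp only [List.ofFn_eq_map]
  exact continuous_list_prod _ fun i _ =>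
    continuous_const.mul ((continuous_exp_neg_smul D).comp (continuous_apply i))

lemma integrableOn_volterraIntegral (X : A) (j : ℕ) :
    IntegrableOn (fun u : Fin j → ℝ => exp (-((1 - ∑ i, u i) • X)) * volterraProd D P u)
      (cornerSimplex j) :=
  (((continuous_exp_neg_smul X).comp (by fun_prop)).mul
    (continuous_volterraProd D P j)).continuousOn.integrableOn_compact (cornerSimplex.isCompact j)

@[simp]
lemma volterraIntegral_zero (X : A) : volterraIntegral X D P 0 = exp (-X) := by
  simp [volterraIntegral, volterraProd, Measure.real, volume_pi]

/-- Duhamel's formula for `e^{-t(D+P)}`, `t = 1 - ∑ uᵢ`, multiplied on the right by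
`volterraProd D P u`. -/
lemma intervalIntegral_volterra_cons {m : ℕ} (u : Fin m → ℝ) :
    ∫ x in (0 : ℝ)..(1 - ∑ i, u i),
        exp (-((1 - ∑ i, (Fin.cons x u : Fin (m + 1) → ℝ) i) • (D + P)))
          * volterraProd D P (Fin.cons x u : Fin (m + 1) → ℝ) =
      exp (-((1 - ∑ i, u i) • D)) * volterraProd D P u
        - exp (-((1 - ∑ i, u i) • (D + P))) * volterraProd D P u := by
  set t := 1 - ∑ i, u i
  set c := volterraProd D P u
  have hslice (x : ℝ) : exp (-((1 - ∑ i, (Fin.cons x u : Fin (m + 1) → ℝ) i) • (D + P)))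
        * volterraProd D P (Fin.cons x u : Fin (m + 1) → ℝ) =
      exp (-((t - x) • (D + P))) * P * exp (-(x • D)) * c := by
    rw [Fin.sum_cons, sub_add_eq_sub_sub_swap, volterraProd_cons]
    simp only [mul_assoc]
    rfl
  have hint : IntervalIntegrable (fun x => exp (-((t - x) • (D + P))) * P * exp (-(x • D)))
      volume 0 t :=
    ((((continuous_exp_neg_smul (D + P)).comp (continuous_sub_left t)).mul
      continuous_const).mul (continuous_exp_neg_smul D)).intervalIntegrable _ _
  have hmul := ((ContinuousLinearMap.mul ℝ A).flip c).intervalIntegral_comp_comm hint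
  simp only [ContinuousLinearMap.flip_apply, ContinuousLinearMap.mul_apply'] at hmul
  rw [intervalIntegral.integral_congr fun x _ => hslice x, hmul,
    exp_neg_smul_add_eq_sub_integral D P t, sub_mul, sub_sub_cancel]

lemma volterraIntegral_succ (m : ℕ) :
    volterraIntegral (D + P) D P (m + 1) =
      volterraIntegral D D P m - volterraIntegral (D + P) D P m := by
  rw [volterraIntegral, setIntegral_cornerSimplex_succ (integrableOn_volterraIntegral D P _ _),
    volterraIntegral, volterraIntegral,
    ← integral_sub (integrableOn_volterraIntegral D P _ _) (integrableOn_volterraIntegral D P _ _)]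
  simp only [intervalIntegral_volterra_cons]

theorem exp_neg_add_eq_sum_volterraIntegral_add (n : ℕ) :
    exp (-(D + P)) = ∑ j ∈ Finset.range n, (-1 : ℤ) ^ j • volterraIntegral D D P j
      + (-1 : ℤ) ^ n • volterraIntegral (D + P) D P n := by
  induction n with
  | zero => simp
  | succ n ih =>
    rw [ih, Finset.sum_range_succ, volterraIntegral_succ, pow_succ, mul_neg_one, neg_smul,
      smul_sub]
    abel

end Volterra

theorem stmt16_general {A : Type*} [NormedRing A] [NormedAlgebra ℂ A] [CompleteSpace A]
    (k : ℕ) (N : Set A)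
    (hNr : ∀ a : A, ∀ x ∈ N, x * a ∈ N)
    (hNnil : ∀ f : Fin (k + 1) → A, (∀ i, f i ∈ N) → (List.ofFn f).prod = 0)
    (D P : A) (hP : P ∈ N) :
    NormedSpace.exp (-(D + P)) = NormedSpace.exp (-D)
      + ∑ j ∈ Finset.Icc 1 k, ((-1 : ℂ) ^ j) •
          ∫ u in {u : Fin j → ℝ | (∀ i, 0 ≤ u i) ∧ ∑ i, u i ≤ 1},
            NormedSpace.exp (-((1 - ∑ i, u i) • D)) *
              (List.ofFn (fun i => P * NormedSpace.exp (-(u i • D)))).prod := by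
  have h := exp_neg_add_eq_sum_volterraIntegral_add D P (k + 1)
  rw [volterraIntegral_eq_zero_of_mem hNr hNnil hP, smul_zero, add_zero, Finset.range_eq_Ico,
    Finset.sum_eq_sum_Ico_succ_bot (Nat.add_one_pos k), zero_add,
    Finset.Ico_add_one_right_eq_Icc] at h
  rw [h, pow_zero, one_smul, volterraIntegral_zero]
  congr 1
  refine Finset.sum_congr rfl fun j _ => ?_
  rw [← Int.cast_smul_eq_zsmul ℂ]
  push_cast
  rfl

/-- Volterra expansion: if `P` lies in an ideal `N` with `N^{k+1} = 0`, then
`e^{-(D+P)} = e^{-D} + ∑_{j=1}^{k} (-1)^j ∫_{Δ_j} e^{-u₀D} P e^{-u₁D} P ⋯ P e^{-u_jD} dσ(u)`,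
the simplex `Δ_j` being parametrized by `(u₁,…,u_j)` with `u_i ≥ 0`, `∑ u_i ≤ 1`,
and `u₀ = 1 - ∑ u_i`. -/
theorem stmt16 {A : Type*} [NormedRing A] [NormedAlgebra ℂ A] [CompleteSpace A]
    (k : ℕ) (N : Set A)
    (hNl : ∀ a : A, ∀ x ∈ N, a * x ∈ N) (hNr : ∀ a : A, ∀ x ∈ N, x * a ∈ N)
    (hNnil : ∀ f : Fin (k + 1) → A, (∀ i, f i ∈ N) → (List.ofFn f).prod = 0)
    (D P : A) (hP : P ∈ N) :
    NormedSpace.exp (-(D + P)) = NormedSpace.exp (-D)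
      + ∑ j ∈ Finset.Icc 1 k, ((-1 : ℂ) ^ j) •
          ∫ u in {u : Fin j → ℝ | (∀ i, 0 ≤ u i) ∧ ∑ i, u i ≤ 1},
            NormedSpace.exp (-((1 - ∑ i, u i) • D)) *
              (List.ofFn (fun i => P * NormedSpace.exp (-(u i • D)))).prod :=
  stmt16_general k N hNr hNnil D P hP
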